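/- arXiv:2107.13191 — 4 statements merged into one kernel-verified Lean document; each statement's English description precedes it below -/
import Mathlib

section
/- Let g : ℝ → ℝ be continuous and supported on [0, N], and define G_n(x) := ((V^n g)(x), (V^n g)(x+1), ..., (V^n g)(x+N-1))^T. Then for all x ∈ [0,1] and n ≥ 1, G_n(x) = T_{B_1(x)} T_{B_2(x)} ⋯ T_{B_n(x)} G(R^n(x)), where B_k(x) are the binary bits of x, R^n is the n-fold residual map, and T_0, T_1 are the N×N matrices with entries (T_0)_{ij} = c_{2i-j-1}, (T_1)_{ij} = c_{2i-j} (c extended by zero). -/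
/-- The quantizer `Q`. -/
noncomputable def Q (x : ℝ) : ℝ := if (1:ℝ)/2 ≤ x then 1 else 0

/-- The residual map `R`, extended off `[0,1]`. -/
noncomputable def R (x : ℝ) : ℝ :=
  if x ≤ 0 then 0 else if 1 ≤ x then 1 else 2 * x - Q x

lemma R_mem (x : ℝ) : R x ∈ Set.Icc (0:ℝ) 1 := by
  unfold R Q
  split_ifs with h1 h2 h3 <;> constructor <;> norm_num <;> linarith

/-- Key reindexing identity for the one-step cascade. -/
lemma cascade_key (N : ℕ) (c : ℤ → ℝ) (hc : ∀ m : ℤ, m < 0 ∨ (N : ℤ) < m → c m = 0)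
    (f : ℝ → ℝ) (hf : ∀ y : ℝ, y ≤ 0 ∨ (N : ℝ) ≤ y → f y = 0)
    (r : ℝ) (hr0 : 0 ≤ r) (hr1 : r ≤ 1)
    (a : ℤ) (ha0 : 0 ≤ a) (ha1 : a ≤ 2 * N) :
    ∑ j ∈ Finset.range (N + 1), c j * f (r + a - j)
      = ∑ j ∈ Finset.range N, c (a - j) * f (r + j) := by
  have h1 : ∑ j ∈ Finset.range (N + 1), c j * f (r + a - j)
      = ∑ m ∈ Finset.Icc (a - N) a, c (a - m) * f (r + m) := by
    refine Finset.sum_nbij' (fun j => a - (j : ℤ)) (fun m => (a - m).toNat)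
      ?_ ?_ ?_ ?_ ?_
    · intro x hx
      simp only [Finset.mem_range] at hx
      simp only [Finset.mem_Icc]; omega
    · intro m hm
      simp only [Finset.mem_Icc] at hm
      simp only [Finset.mem_range]; omega
    · intro x hx
      show (a - (a - (x : ℤ))).toNat = x
      simp only [Finset.mem_range] at hx; omega
    · intro m hm
      show a - ((a - m).toNat : ℤ) = m
      simp only [Finset.mem_Icc] at hm; omega
    · intro x hx
      show c x * f (r + (a : ℝ) - (x : ℕ)) = c (a - (a - (x : ℤ))) * f (r + ((a - (x : ℤ) : ℤ) : ℝ))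
      have h2 : a - (a - (x : ℤ)) = (x : ℤ) := by omega
      rw [h2]
      congr 2
      push_cast; ring
  have h2 : ∑ m ∈ Finset.Icc (a - N) a, c (a - m) * f (r + m)
      = ∑ m ∈ Finset.Icc (-(N:ℤ)) (2 * N), c (a - m) * f (r + m) := by
    refine Finset.sum_subset (Finset.Icc_subset_Icc (by omega) (by omega)) ?_
    intro m hm hns
    simp only [Finset.mem_Icc] at hm hns
    have : c (a - m) = 0 := hc _ (by omega)
    rw [this, zero_mul]
  have h3 : ∑ m ∈ Finset.Icc (0:ℤ) ((N:ℤ) - 1), c (a - m) * f (r + m)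
      = ∑ m ∈ Finset.Icc (-(N:ℤ)) (2 * N), c (a - m) * f (r + m) := by
    refine Finset.sum_subset (Finset.Icc_subset_Icc (by omega) (by omega)) ?_
    intro m hm hns
    simp only [Finset.mem_Icc] at hm hns
    have hm' : m ≤ -1 ∨ (N : ℤ) ≤ m := by omega
    have : f (r + m) = 0 := by
      apply hf
      rcases hm' with h | h
      · left
        have : (m : ℝ) ≤ -1 := by exact_mod_cast h
        linarith
      · right
        have : (N : ℝ) ≤ (m : ℝ) := by exact_mod_cast h
        linarith
    rw [this, mul_zero]
  have h4 : ∑ m ∈ Finset.Icc (0:ℤ) ((N:ℤ) - 1), c (a - m) * f (r + m)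
      = ∑ j ∈ Finset.range N, c (a - j) * f (r + j) := by
    refine Finset.sum_nbij' (fun m => m.toNat) (fun j => (j : ℤ)) ?_ ?_ ?_ ?_ ?_
    · intro m hm; simp only [Finset.mem_Icc] at hm; simp only [Finset.mem_range]; omega
    · intro j hj; simp only [Finset.mem_range] at hj; simp only [Finset.mem_Icc]; omega
    · intro m hm
      show ((m.toNat : ℕ) : ℤ) = m
      simp only [Finset.mem_Icc] at hm; omega
    · intro j hj
      show ((j : ℤ)).toNat = j
      omega
    · intro m hm
      show c (a - m) * f (r + (m : ℝ)) = c (a - ((m.toNat : ℕ) : ℤ)) * f (r + ((m.toNat : ℕ) : ℝ))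
      simp only [Finset.mem_Icc] at hm
      have h : ((m.toNat : ℕ) : ℤ) = m := by omega
      rw [h]
      congr 2
      have h' : ((m.toNat : ℕ) : ℝ) = (m : ℝ) := by
        exact_mod_cast congrArg (fun z : ℤ => (z : ℝ)) h
      rw [h']
  rw [h1, h2, ← h3, h4]

/-- One step of the cascade algorithm. -/
lemma cascade_step (N : ℕ) (c : ℤ → ℝ) (hc : ∀ m : ℤ, m < 0 ∨ (N : ℤ) < m → c m = 0)
    (f : ℝ → ℝ) (hf : ∀ y : ℝ, y ≤ 0 ∨ (N : ℝ) ≤ y → f y = 0)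
    (Vf : ℝ → ℝ) (hVf : ∀ x : ℝ, Vf x = ∑ j ∈ Finset.range (N + 1), c j * f (2 * x - j))
    (T0 T1 : Matrix (Fin N) (Fin N) ℝ)
    (hT0 : ∀ i j : Fin N, T0 i j = c (2 * (i : ℤ) - (j : ℤ)))
    (hT1 : ∀ i j : Fin N, T1 i j = c (2 * (i : ℤ) - (j : ℤ) + 1))
    (T : ℝ → Matrix (Fin N) (Fin N) ℝ)
    (hT : ∀ b : ℝ, T b = if b < 1/2 then T0 else T1)
    (x : ℝ) (hx : x ∈ Set.Icc (0:ℝ) 1) (k : Fin N) :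
    Vf (x + k) = ((T (Q x)).mulVec (fun j : Fin N => f (R x + j))) k := by
  obtain ⟨hx0, hx1⟩ := hx
  have hk : (k : ℕ) < N := k.isLt
  by_cases hhalf : (1:ℝ)/2 ≤ x
  · -- second half: Q x = 1, T1, R x = 2x - 1
    have hQ : Q x = 1 := if_pos hhalf
    have hTQ : T (Q x) = T1 := by rw [hQ, hT]; norm_num
    have hR : R x = 2 * x - 1 := by
      unfold R
      split_ifs with h1 h2
      · linarith
      · linarith
      · rw [hQ]
    rw [hTQ, hR, hVf]
    have hrhs : (T1.mulVec fun j : Fin N => f (2 * x - 1 + j)) k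
        = ∑ j ∈ Finset.range N, c (2 * (k : ℤ) + 1 - j) * f (2 * x - 1 + j) := by
      rw [Matrix.mulVec, dotProduct]
      rw [← Fin.sum_univ_eq_sum_range (fun j : ℕ => c (2 * (k : ℤ) + 1 - j) * f (2 * x - 1 + j)) N]
      refine Finset.sum_congr rfl fun j _ => ?_
      rw [hT1]
      congr 2
      ring
    rw [hrhs]
    have hlhs : ∑ j ∈ Finset.range (N + 1), c j * f (2 * (x + k) - j)
        = ∑ j ∈ Finset.range (N + 1), c j * f ((2 * x - 1) + ((2 * (k:ℤ) + 1 : ℤ) : ℝ) - j) := by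
      refine Finset.sum_congr rfl fun j _ => ?_
      congr 1
      push_cast; ring
    rw [hlhs]
    exact cascade_key N c hc f hf (2 * x - 1) (by linarith) (by linarith)
      (2 * (k : ℤ) + 1) (by omega) (by omega)
  · -- first half: Q x = 0, T0, R x = 2x
    push_neg at hhalf
    have hQ : Q x = 0 := if_neg (not_le.mpr hhalf)
    have hTQ : T (Q x) = T0 := by rw [hQ, hT]; norm_num
    have hR : R x = 2 * x := by
      unfold R
      split_ifs with h1 h2
      · linarith
      · linarith
      · rw [hQ]; ring
    rw [hTQ, hR, hVf]
    have hrhs : (T0.mulVec fun j : Fin N => f (2 * x + j)) k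
        = ∑ j ∈ Finset.range N, c (2 * (k : ℤ) - j) * f (2 * x + j) := by
      rw [Matrix.mulVec, dotProduct]
      rw [← Fin.sum_univ_eq_sum_range (fun j : ℕ => c (2 * (k : ℤ) - j) * f (2 * x + j)) N]
      refine Finset.sum_congr rfl fun j _ => ?_
      rw [hT0]
    rw [hrhs]
    have hlhs : ∑ j ∈ Finset.range (N + 1), c j * f (2 * (x + k) - j)
        = ∑ j ∈ Finset.range (N + 1), c j * f ((2 * x) + ((2 * (k:ℤ) : ℤ) : ℝ) - j) := by
      refine Finset.sum_congr rfl fun j _ => ?_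
      congr 1
      push_cast; ring
    rw [hlhs]
    exact cascade_key N c hc f hf (2 * x) (by linarith) (by linarith)
      (2 * (k : ℤ)) (by omega) (by omega)

/-- The cascade algorithm: for `x ∈ [0,1]` and `n ≥ 1`,
`G_n(x) = T_{B₁(x)} T_{B₂(x)} ⋯ T_{Bₙ(x)} G(Rⁿ(x))`, where `B_{j+1}(x) = Q(R^j(x))`,
`G_n(x) = (Vⁿg(x), …, Vⁿg(x+N-1))`, `G(y) = (g(y), …, g(y+N-1))`, and the matrices
`(T₀)_{ij} = c_{2i-j-1}`, `(T₁)_{ij} = c_{2i-j}` (1-based indexing). -/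
theorem cascade_algorithm
    (N : ℕ) (hN : 1 ≤ N) (c : ℤ → ℝ)
    (hc : ∀ m : ℤ, m < 0 ∨ (N : ℤ) < m → c m = 0)
    (g : ℝ → ℝ) (hg : Continuous g)
    (hsupp : ∀ x : ℝ, x ∉ Set.Icc (0 : ℝ) (N : ℝ) → g x = 0)
    (V : (ℝ → ℝ) → (ℝ → ℝ))
    (hV : ∀ h : ℝ → ℝ, ∀ x : ℝ, V h x = ∑ j ∈ Finset.range (N + 1), c j * h (2 * x - j))
    (G : ℝ → Fin N → ℝ) (hG : ∀ y, ∀ k : Fin N, G y k = g (y + k))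
    (T0 T1 : Matrix (Fin N) (Fin N) ℝ)
    (hT0 : ∀ i j : Fin N, T0 i j = c (2 * (i : ℤ) - (j : ℤ)))
    (hT1 : ∀ i j : Fin N, T1 i j = c (2 * (i : ℤ) - (j : ℤ) + 1))
    (T : ℝ → Matrix (Fin N) (Fin N) ℝ)
    (hT : ∀ b : ℝ, T b = if b < 1/2 then T0 else T1) :
    ∀ x ∈ Set.Icc (0:ℝ) 1, ∀ n : ℕ, 1 ≤ n → ∀ k : Fin N,
      V^[n] g (x + k) =
        ((((List.range n).map (fun i => T (Q (R^[i] x)))).prod).mulVec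
          (G (R^[n] x))) k := by
  -- g vanishes at 0 and N by continuity
  have hcl : IsClosed {x : ℝ | g x = 0} := isClosed_eq hg continuous_const
  have hgN : g (N : ℝ) = 0 := by
    have h1 : Set.Ioi (N : ℝ) ⊆ {x : ℝ | g x = 0} := fun y hy =>
      hsupp y (fun hy' => absurd hy'.2 (not_le.mpr hy))
    have h2 : (N : ℝ) ∈ closure {x : ℝ | g x = 0} := by
      apply closure_mono h1
      rw [closure_Ioi]
      exact Set.self_mem_Ici
    rwa [hcl.closure_eq] at h2
  have hg0 : g 0 = 0 := by
    have h1 : Set.Iio (0 : ℝ) ⊆ {x : ℝ | g x = 0} := fun y hy =>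
      hsupp y (fun hy' => absurd hy'.1 (not_le.mpr hy))
    have h2 : (0 : ℝ) ∈ closure {x : ℝ | g x = 0} := by
      apply closure_mono h1
      rw [closure_Iio]
      exact Set.self_mem_Iic
    rwa [hcl.closure_eq] at h2
  -- iterated support property
  have hsupp' : ∀ n : ℕ, ∀ y : ℝ, y ≤ 0 ∨ (N : ℝ) ≤ y → V^[n] g y = 0 := by
    intro n
    induction n with
    | zero =>
      intro y hy
      simp only [Function.iterate_zero, id_eq]
      rcases hy with h | h
      · rcases eq_or_lt_of_le h with h' | h'
        · rw [h']; exact hg0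
        · exact hsupp y (fun hy' => absurd hy'.1 (not_le.mpr h'))
      · rcases eq_or_lt_of_le h with h' | h'
        · rw [← h']; exact hgN
        · exact hsupp y (fun hy' => absurd hy'.2 (not_le.mpr h'))
    | succ n ih =>
      intro y hy
      rw [Function.iterate_succ_apply', hV]
      refine Finset.sum_eq_zero fun j hj => ?_
      simp only [Finset.mem_range] at hj
      have hjN : (j : ℝ) ≤ N := by exact_mod_cast Nat.lt_succ_iff.mp hj
      have hj0 : (0 : ℝ) ≤ j := Nat.cast_nonneg j
      have : V^[n] g (2 * y - j) = 0 := by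
        apply ih
        rcases hy with h | h
        · left; linarith
        · right; linarith
      rw [this, mul_zero]
  -- main claim by induction
  have main : ∀ n : ℕ, ∀ x ∈ Set.Icc (0:ℝ) 1, ∀ k : Fin N,
      V^[n] g (x + k) =
        ((((List.range n).map (fun i => T (Q (R^[i] x)))).prod).mulVec
          (G (R^[n] x))) k := by
    intro n
    induction n with
    | zero =>
      intro x hx k
      simp only [List.range_zero, List.map_nil, List.prod_nil, Function.iterate_zero, id_eq,
        Matrix.one_mulVec]
      rw [hG]
    | succ n ih =>
      intro x hx k
      rw [Function.iterate_succ_apply']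
      rw [cascade_step N c hc (V^[n] g) (hsupp' n) (V (V^[n] g)) (hV (V^[n] g))
        T0 T1 hT0 hT1 T hT x hx k]
      have hinner : (fun j : Fin N => V^[n] g (R x + j)) =
          ((((List.range n).map (fun i => T (Q (R^[i] (R x))))).prod).mulVec
            (G (R^[n] (R x)))) := by
        funext j
        exact ih (R x) (R_mem x) j
      rw [hinner, Matrix.mulVec_mulVec]
      have hlist : (List.range (n + 1)).map (fun i => T (Q (R^[i] x)))
          = T (Q x) :: (List.range n).map (fun i => T (Q (R^[i] (R x)))) := by
        rw [List.range_succ_eq_map, List.map_cons, List.map_map]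
        have hhead : T (Q (R^[0] x)) = T (Q x) := by
          rw [Function.iterate_zero, id_eq]
        have htail : List.map ((fun i => T (Q (R^[i] x))) ∘ Nat.succ) (List.range n)
            = List.map (fun i => T (Q (R^[i] (R x)))) (List.range n) := by
          refine List.map_congr_left fun i _ => ?_
          simp only [Function.comp_apply]
          rw [Function.iterate_succ_apply]
        rw [hhead, htail]
      rw [hlist, List.prod_cons, ← Function.iterate_succ_apply]
  intro x hx n _ k
  exact main n x hx k
end

section
/- Define Π : ℝ × ℝ^N → ℝ^N by Π(x, y) := -ReLU(M x 𝟙 - y) - ReLU(M(1-x) 𝟙 - ReLU(-y)) + M 𝟙, where ReLU acts componentwise and 𝟙 = (1,...,1)^T. Then for every y ∈ ℝ^N with ‖y‖_∞ ≤ M: Π(1, y) = y and Π(0, y) = 0; moreover Π(x, 0) = 0 for every x ∈ [0, 1]. -/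
/-- The NN product surrogate `Π(x,y) = -ReLU(Mx𝟙 - y) - ReLU(M(1-x)𝟙 - ReLU(-y)) + M𝟙`
satisfies `Π(1,y) = y`, `Π(0,y) = 0` when `‖y‖_∞ ≤ M`, and `Π(x,0) = 0` for `x ∈ [0,1]`. -/
theorem nn_product_surrogate
    (N : ℕ) (hN : 1 ≤ N) (M : ℝ) (hM : 0 < M)
    (P : ℝ → (Fin N → ℝ) → (Fin N → ℝ))
    (hP : ∀ x : ℝ, ∀ y : Fin N → ℝ, ∀ i : Fin N,
      P x y i = -(max (M * x * 1 - y i) 0)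
        - max (M * (1 - x) * 1 - max (-(y i)) 0) 0 + M * 1) :
    (∀ y : Fin N → ℝ, (∀ i, |y i| ≤ M) → P 1 y = y ∧ P 0 y = 0) ∧
    (∀ x ∈ Set.Icc (0:ℝ) 1, P x 0 = 0) := by
  constructor
  · intro y hy
    constructor
    · funext i
      have h := abs_le.mp (hy i)
      rw [hP]
      rcases le_total (y i) 0 with h0 | h0
      · rw [show max (-(y i)) 0 = -(y i) from max_eq_left (by linarith),
          show max (M * 1 * 1 - y i) 0 = M * 1 * 1 - y i from max_eq_left (by linarith),
          show max (M * (1 - 1) * 1 - -(y i)) 0 = 0 from max_eq_right (by linarith)]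
        ring
      · rw [show max (-(y i)) 0 = 0 from max_eq_right (by linarith),
          show max (M * 1 * 1 - y i) 0 = M * 1 * 1 - y i from max_eq_left (by linarith),
          show max (M * (1 - 1) * 1 - 0) 0 = 0 from by norm_num]
        ring
    · funext i
      have h := abs_le.mp (hy i)
      rw [hP]
      simp only [Pi.zero_apply]
      rcases le_total (y i) 0 with h0 | h0
      · rw [show max (-(y i)) 0 = -(y i) from max_eq_left (by linarith),
          show max (M * 0 * 1 - y i) 0 = M * 0 * 1 - y i from max_eq_left (by linarith),
          show max (M * (1 - 0) * 1 - -(y i)) 0 = M * (1 - 0) * 1 - -(y i) from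
            max_eq_left (by linarith)]
        ring
      · rw [show max (-(y i)) 0 = 0 from max_eq_right (by linarith),
          show max (M * 0 * 1 - y i) 0 = 0 from max_eq_right (by linarith),
          show max (M * (1 - 0) * 1 - 0) 0 = M * (1 - 0) * 1 - 0 from max_eq_left (by linarith)]
        ring
  · intro x hx
    obtain ⟨h0, h1⟩ := hx
    funext i
    rw [hP]
    simp only [Pi.zero_apply, neg_zero, sub_zero, max_self]
    rw [show max (M * x * 1) 0 = M * x * 1 from max_eq_left (by nlinarith),
      show max (M * (1 - x) * 1) 0 = M * (1 - x) * 1 from max_eq_left (by nlinarith)]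
    ring
end

section
/- Let 7/16 < α < β < 1/2 with 1/2 - α < 2^{-n}, and let R̂ := R̂_{α,β} be the continuous piecewise linear function with breakpoints {0, α, β, 1/2, 1} satisfying: R̂(x) = 0 for x ≤ 0, R̂(x) = R(x) for 0 ≤ x ≤ α and for x ≥ 1/2, R̂ linear on [α, β] interpolating R(α) at α and 0 at β, and R̂ = 0 on [β, 1/2]. Then for each n ≥ 1, R̂^n(x) = R^n(x) for all x ∈ Ω_n := [0,1] \ ⋃_{j=1}^n E_j, where δ := 1/2 - α and E_j := ⋃_{0 < i < 2^j} [i 2^{-j} - δ 2^{-j+1}, i 2^{-j}]. -/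
lemma R_lo {x : ℝ} (h0 : 0 ≤ x) (h : x < 1/2) : R x = 2 * x := by
  unfold R Q
  rcases eq_or_lt_of_le h0 with h0 | h0
  · simp [← h0]
  · rw [if_neg (by linarith), if_neg (by linarith), if_neg (by linarith)]
    ring

lemma R_hi {x : ℝ} (h : 1/2 ≤ x) (h1 : x ≤ 1) : R x = 2 * x - 1 := by
  unfold R Q
  rcases eq_or_lt_of_le h1 with h1 | h1
  · subst h1; norm_num
  · rw [if_neg (by linarith), if_neg (by linarith), if_pos h]

/-- Part (ii) of Lemma 3.3: `R̂ⁿ = Rⁿ` on `Ωₙ = [0,1] \ ⋃_{j=1}^n E_j`,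
where `E_j = ⋃_{0<i<2^j} [i2^{-j} - δ2^{-j+1}, i2^{-j}]`, `δ = 1/2 - α`. -/
theorem Rhat_iterate_eq_R_iterate
    (α β : ℝ) (hα : 7/16 < α) (hαβ : α < β) (hβ : β < 1/2)
    (Rh : ℝ → ℝ)
    (h0 : ∀ x : ℝ, x ≤ 0 → Rh x = 0)
    (h1 : ∀ x ∈ Set.Icc (0:ℝ) α, Rh x = R x)
    (h2 : ∀ x : ℝ, 1/2 ≤ x → Rh x = R x)
    (h3 : ∀ x ∈ Set.Icc α β, Rh x = R α * (β - x) / (β - α))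
    (h4 : ∀ x ∈ Set.Icc β (1/2 : ℝ), Rh x = 0)
    (n : ℕ) (hn : 1 ≤ n) (hδn : 1/2 - α < 1 / 2 ^ n) :
    ∀ x ∈ Set.Icc (0:ℝ) 1,
      (∀ j : ℕ, 1 ≤ j → j ≤ n → ∀ i : ℕ, 0 < i → i < 2 ^ j →
        x ∉ Set.Icc ((i : ℝ) / 2 ^ j - (1/2 - α) * 2 / 2 ^ j) ((i : ℝ) / 2 ^ j)) →
      Rh^[n] x = R^[n] x := by
  clear hn
  suffices H : ∀ m : ℕ, 1/2 - α < 1 / 2 ^ m →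
      ∀ x ∈ Set.Icc (0:ℝ) 1,
      (∀ j : ℕ, 1 ≤ j → j ≤ m → ∀ i : ℕ, 0 < i → i < 2 ^ j →
        x ∉ Set.Icc ((i : ℝ) / 2 ^ j - (1/2 - α) * 2 / 2 ^ j) ((i : ℝ) / 2 ^ j)) →
      Rh^[m] x = R^[m] x from H n hδn
  intro m
  induction m with
  | zero => intro _ x _ _; simp
  | succ m ih =>
    intro hδ x hx hcond
    have hδm : 1/2 - α < 1 / 2 ^ m := by
      refine lt_of_lt_of_le hδ ?_
      apply one_div_le_one_div_of_le (by positivity)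
      exact pow_le_pow_right₀ (by norm_num) (Nat.le_succ m)
    obtain ⟨hx0, hx1⟩ := hx
    have hsplit : x < α ∨ 1/2 < x := by
      by_contra h
      push_neg at h
      refine hcond 1 le_rfl (Nat.le_add_left 1 m) 1 one_pos one_lt_two ⟨?_, ?_⟩ <;>
        push_cast <;> nlinarith [h.1, h.2]
    rw [Function.iterate_succ_apply, Function.iterate_succ_apply]
    rcases hsplit with hlt | hgt
    · have hRh : Rh x = R x := h1 x ⟨hx0, hlt.le⟩
      have hRx : R x = 2 * x := R_lo hx0 (by linarith)
      rw [hRh]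
      apply ih hδm
      · rw [hRx]; exact ⟨by linarith, by linarith⟩
      · intro j hj1 hjm i hi0 hi2
        rw [hRx]
        intro hmem
        obtain ⟨hl, hr⟩ := hmem
        refine hcond (j+1) (by omega) (by omega) i hi0
          (lt_of_lt_of_le hi2 (Nat.pow_le_pow_right (by norm_num) (Nat.le_succ j)))
          ⟨?_, ?_⟩
        · rw [← sub_div, div_le_iff₀ (by positivity), pow_succ]
          rw [← sub_div, div_le_iff₀ (by positivity)] at hl
          nlinarith
        · rw [le_div_iff₀ (by positivity), pow_succ]
          rw [le_div_iff₀ (by positivity)] at hr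
          nlinarith
    · have hRh : Rh x = R x := h2 x hgt.le
      have hRx : R x = 2 * x - 1 := R_hi hgt.le hx1
      rw [hRh]
      apply ih hδm
      · rw [hRx]; exact ⟨by linarith, by linarith⟩
      · intro j hj1 hjm i hi0 hi2
        rw [hRx]
        intro hmem
        obtain ⟨hl, hr⟩ := hmem
        refine hcond (j+1) (by omega) (by omega) (i + 2^j) (Nat.add_pos_left hi0 _)
          (by rw [pow_succ, Nat.mul_two]; exact Nat.add_lt_add_right hi2 _)
          ⟨?_, ?_⟩
        · push_cast
          rw [← sub_div, div_le_iff₀ (by positivity), pow_succ]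
          rw [← sub_div, div_le_iff₀ (by positivity)] at hl
          nlinarith
        · push_cast
          rw [le_div_iff₀ (by positivity), pow_succ]
          rw [le_div_iff₀ (by positivity)] at hr
          nlinarith
end

section
/- Let g : ℝ → ℝ be a nonnegative continuous function supported on [1/8, 7/8], and let n ≥ 1. Choose parameters 7/16 < α₁ < β₁ < α₂ < β₂ < 1/2 with 1/2 - α₁ < 2^{-n-3} and 1/2 - α₂ < (1/2 - β₁) 2^{-n+1}. Then for all x ∈ ℝ, g(R^n(x)) = min{ g(R̂₁^n(x)), g(R̂₂^n(x)) }, where R̂_i := R̂_{α_i, β_i}. -/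
/-- The CPwL modification `R̂_{α,β}` of the residual map `R`. -/
noncomputable def Rhat (α β : ℝ) (x : ℝ) : ℝ :=
  if x ≤ 0 then 0
  else if x ≤ α then R x
  else if x ≤ β then R α * (β - x) / (β - α)
  else if x ≤ 1/2 then 0
  else R x

lemma R_low {x : ℝ} (h1 : 0 < x) (h2 : x < 1/2) : R x = 2 * x := by
  unfold R Q
  rw [if_neg (by linarith), if_neg (by linarith), if_neg (by linarith)]
  ring

lemma R_high {x : ℝ} (h1 : 1/2 ≤ x) (h2 : x < 1) : R x = 2 * x - 1 := by
  unfold R Q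
  rw [if_neg (by linarith), if_neg (by linarith), if_pos h1]

lemma Rhat_eq_R (α β : ℝ) (hα : 0 < α) (hαβ : α < β) (hβ : β < 1/2)
    {z : ℝ} (hz : z ∉ Set.Ioo α (1/2:ℝ)) : Rhat α β z = R z := by
  unfold Rhat
  by_cases h0 : z ≤ 0
  · rw [if_pos h0]; unfold R; rw [if_pos h0]
  · rw [if_neg h0]
    by_cases hza : z ≤ α
    · rw [if_pos hza]
    · rw [if_neg hza]
      push_neg at hza
      have hz2 : (1:ℝ)/2 ≤ z := by
        by_contra h; push_neg at h; exact hz ⟨hza, h⟩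
      rw [if_neg (by linarith : ¬ z ≤ β)]
      by_cases h12 : z ≤ 1/2
      · have he : z = 1/2 := le_antisymm h12 hz2
        rw [if_pos h12, he]
        unfold R Q; norm_num
      · rw [if_neg h12]

lemma Rhat_zero (α β : ℝ) : Rhat α β 0 = 0 := by
  unfold Rhat; rw [if_pos le_rfl]

lemma Rhat_iter_zero (α β : ℝ) : ∀ m, (Rhat α β)^[m] (0:ℝ) = 0 := by
  intro m
  induction m with
  | zero => rfl
  | succ m ih => rw [Function.iterate_succ_apply', ih, Rhat_zero]

lemma iterate_agree (α β : ℝ) (hα : 0 < α) (hαβ : α < β) (hβ : β < 1/2) (x : ℝ) :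
    ∀ m, (∀ i, i < m → R^[i] x ∉ Set.Ioo α (1/2:ℝ)) → (Rhat α β)^[m] x = R^[m] x := by
  intro m
  induction m with
  | zero => intro _; rfl
  | succ m ih =>
    intro h
    rw [Function.iterate_succ_apply', Function.iterate_succ_apply',
      ih (fun i hi => h i (by omega)), Rhat_eq_R α β hα hαβ hβ (h m (by omega))]

lemma iter_near_one : ∀ (j : ℕ) (z : ℝ), z < 1 → 1 - z < 1/2^(j+3) →
    R^[j] z < 1 ∧ 1 - R^[j] z < 1/8 := by
  intro j
  induction j with
  | zero =>
    intro z h1 h2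
    norm_num at h2 ⊢
    exact ⟨h1, by linarith⟩
  | succ j ih =>
    intro z h1 h2
    have hp : (0:ℝ) < 2^(j+3) := by positivity
    have he : (2:ℝ)^(j+1+3) = 2^(j+3) * 2 := by
      rw [show j+1+3 = (j+3)+1 by omega, pow_succ]
    rw [he] at h2
    have h2' : 1 - z < 1/(2^(j+3)*2) := h2
    have hhalf : (1:ℝ)/(2^(j+3)*2) ≤ 1/2 := by
      apply one_div_le_one_div_of_le (by norm_num)
      nlinarith [one_le_pow₀ (one_le_two : (1:ℝ) ≤ 2) (n := j+3)]
    have hz2 : (1:ℝ)/2 ≤ z := by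
      have h16 : (1:ℝ)/(2^(j+3)*2) ≤ 1/2 := hhalf
      linarith
    rw [Function.iterate_succ_apply, R_high hz2 h1]
    apply ih
    · linarith
    · have hm : 2 * ((1:ℝ)/(2^(j+3)*2)) = 1/2^(j+3) := by
        field_simp
      linarith

/-- Key identity (3.11): for a nonnegative continuous `g` supported on `[1/8,7/8]`
and suitably chosen `7/16 < α₁ < β₁ < α₂ < β₂ < 1/2`,
`g(Rⁿ(x)) = min{ g(R̂₁ⁿ(x)), g(R̂₂ⁿ(x)) }` for all `x`. -/
theorem g_comp_Rn_eq_min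
    (g : ℝ → ℝ) (hg : Continuous g) (hpos : ∀ x, 0 ≤ g x)
    (hsupp : ∀ x : ℝ, x ∉ Set.Icc ((1:ℝ)/8) ((7:ℝ)/8) → g x = 0)
    (n : ℕ) (hn : 1 ≤ n)
    (α₁ β₁ α₂ β₂ : ℝ)
    (h1 : 7/16 < α₁) (h2 : α₁ < β₁) (h3 : β₁ < α₂) (h4 : α₂ < β₂) (h5 : β₂ < 1/2)
    (hδ1 : 1/2 - α₁ < 1 / 2 ^ (n + 3))
    (hδ2 : 1/2 - α₂ < (1/2 - β₁) * 2 / 2 ^ n) :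
    ∀ x : ℝ, g (R^[n] x) =
      min (g ((Rhat α₁ β₁)^[n] x)) (g ((Rhat α₂ β₂)^[n] x)) := by
  classical
  have hα₁ : (0:ℝ) < α₁ := by linarith
  have hβ₁ : β₁ < 1/2 := by linarith
  have hα₂ : (0:ℝ) < α₂ := by linarith
  intro x
  by_cases hex : ∃ k, k < n ∧ R^[k] x ∈ Set.Ioo α₁ (1/2:ℝ)
  · -- the interesting case
    set k := Nat.find hex with hkdef
    have hkspec := Nat.find_spec hex
    obtain ⟨hkn, hy1, hy2⟩ : k < n ∧ α₁ < R^[k] x ∧ R^[k] x < 1/2 :=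
      ⟨hkspec.1, hkspec.2.1, hkspec.2.2⟩
    set y := R^[k] x with hy
    have hmin' : ∀ i, i < k → R^[i] x ∉ Set.Ioo α₁ (1/2:ℝ) := by
      intro i hi hmem
      exact Nat.find_min hex hi ⟨by omega, hmem⟩
    have hRy : R y = 2 * y := R_low (by linarith) hy2
    have hRn : ∀ m, R^[m + (k+1)] x = R^[m] (2*y) := by
      intro m
      rw [Function.iterate_add_apply, Function.iterate_succ_apply', ← hy, hRy]
    set j := n - (k+1) with hjdef
    have hn' : n = j + (k+1) := by omega
    have hbound : ∀ m, m < n → R^[m] (2*y) < 1 ∧ 1 - R^[m] (2*y) < 1/8 := by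
      intro m hm
      apply iter_near_one
      · linarith
      · have hp2 : (0:ℝ) < 2^(n+2) := by positivity
        have e2 : 2 * ((1:ℝ)/2^(n+3)) = 1/2^(n+2) := by
          rw [show n+3 = (n+2)+1 by omega, pow_succ]
          field_simp
        have e3 : (1:ℝ)/2^(n+2) ≤ 1/2^(m+3) := by
          apply one_div_le_one_div_of_le (by positivity)
          exact pow_le_pow_right₀ one_le_two (by omega)
        linarith
    have hRnx : R^[n] x = R^[j] (2*y) := by rw [hn']; exact hRn j
    have hjb := hbound j (by omega)
    have hgz : g (R^[n] x) = 0 := by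
      apply hsupp
      intro hmem
      rw [Set.mem_Icc] at hmem
      rw [hRnx] at hmem
      linarith [hjb.2, hmem.2]
    have hagree1 : (Rhat α₁ β₁)^[k] x = R^[k] x :=
      iterate_agree α₁ β₁ hα₁ h2 hβ₁ x k hmin'
    by_cases hyb : y ≤ β₁
    · -- R̂₂ agrees with R for all n steps
      have hag2n : (Rhat α₂ β₂)^[n] x = R^[n] x := by
        apply iterate_agree α₂ β₂ hα₂ h4 h5 x n
        intro i hi hmem
        obtain ⟨hm1, hm2⟩ := hmem
        rcases lt_trichotomy i k with hik | hik | hik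
        · exact hmin' i hik ⟨by linarith, hm2⟩
        · rw [hik, ← hy] at hm1; linarith
        · obtain ⟨m, rfl⟩ : ∃ m, i = m + (k+1) := ⟨i - (k+1), by omega⟩
          rw [hRn m] at hm2
          have := (hbound m (by omega)).2
          linarith
      rw [hag2n, hgz]
      exact (min_eq_right (hpos _)).symm
    · -- R̂₁ sends y to 0
      push_neg at hyb
      have hstep : (Rhat α₁ β₁)^[k+1] x = 0 := by
        rw [Function.iterate_succ_apply', hagree1, ← hy]
        unfold Rhat
        rw [if_neg (by linarith), if_neg (by linarith), if_neg (by linarith),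
          if_pos (le_of_lt hy2)]
      have h1n : (Rhat α₁ β₁)^[n] x = 0 := by
        rw [hn', Function.iterate_add_apply, hstep, Rhat_iter_zero]
      have hg0 : g (0:ℝ) = 0 := by
        apply hsupp
        intro hmem
        rw [Set.mem_Icc] at hmem
        linarith [hmem.1]
      rw [h1n, hg0, hgz]
      exact (min_eq_left (hpos _)).symm
  · -- no disagreement: all three agree
    push_neg at hex
    have hA : ∀ i, i < n → R^[i] x ∉ Set.Ioo α₁ (1/2:ℝ) := hex
    have e1 : (Rhat α₁ β₁)^[n] x = R^[n] x :=
      iterate_agree α₁ β₁ hα₁ h2 hβ₁ x n hA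
    have e2 : (Rhat α₂ β₂)^[n] x = R^[n] x := by
      apply iterate_agree α₂ β₂ hα₂ h4 h5 x n
      intro i hi hmem
      obtain ⟨hm1, hm2⟩ := hmem
      exact hA i hi ⟨by linarith, hm2⟩
    rw [e1, e2, min_self]
end
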